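/- Let ρ : ℝ³ → ℝ be measurable with ρ ≥ 0, m := ∫_{ℝ³} ρ(y) dy < ∞ and K := ∫_{ℝ³} ρ(y)^{5/3} dy < ∞. Then for every R > 0, the potential energy satisfies (1/2) ∫_{ℝ³} ∫_{ℝ³} ρ(x) ρ(y)/|x−y| dy dx ≤ (1/2) m ( m/R + (8π)^{2/5} R^{1/5} K^{3/5} ). -/

import Mathlib

/-!
Split the inner integral at `|x - y| = R`. Outside the ball the kernel is at most `1 / R`, which
gives `m / R`. Inside, Hölder's inequality with exponents `5 / 3` and `5 / 2` gives
`K ^ (3 / 5) * (∫_{|z| < R} |z| ^ (-5 / 2)) ^ (2 / 5)`, and in polar coordinates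
`∫_{|z| < R} |z| ^ (-5 / 2) = 4π ∫₀ᴿ r ^ (-1 / 2) dr = 8π R ^ (1 / 2)`. The resulting bound on the
inner integral is uniform in `x`, so integrating it against `ρ x` costs a factor `m`.
-/

open MeasureTheory Real

noncomputable section

abbrev E3 : Type := EuclideanSpace ℝ (Fin 3)

open Metric Set
open scoped ENNReal

section RadialIntegral

variable {E : Type*} [NormedAddCommGroup E] [NormedSpace ℝ E] [FiniteDimensional ℝ E]
  [MeasurableSpace E] [BorelSpace E] [Nontrivial E] (μ : Measure E) [μ.IsAddHaarMeasure]

theorem integral_ball_norm_rpow_neg {s : ℝ} (hs : s < Module.finrank ℝ E) {R : ℝ} (hR : 0 ≤ R) :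
    ∫ z in ball (0 : E) R, ‖z‖ ^ (-s) ∂μ =
      Module.finrank ℝ E * μ.real (ball 0 1) *
        (R ^ (Module.finrank ℝ E - s) / (Module.finrank ℝ E - s)) := by
  set d := Module.finrank ℝ E
  have hd : 0 < (d : ℝ) - s := sub_pos.2 hs
  have hradial : (ball (0 : E) R).indicator (‖·‖ ^ (-s)) =
      fun z => (Iio R).indicator (· ^ (-s)) ‖z‖ := funext fun z => by
    by_cases hz : ‖z‖ < R <;> simp [indicator, hz]
  have hshell : ∫ y in Ioi (0 : ℝ), y ^ (d - 1) • (Iio R).indicator (· ^ (-s)) y =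
      ∫ y in (0 : ℝ)..R, y ^ ((d : ℝ) - s - 1) := by
    rw [← indicator_smul (Iio R) (fun y : ℝ => y ^ (d - 1)) (· ^ (-s)),
      setIntegral_indicator measurableSet_Iio, Ioi_inter_Iio, intervalIntegral.integral_of_le hR,
      ← integral_Ioc_eq_integral_Ioo]
    refine setIntegral_congr_fun measurableSet_Ioc fun y hy => ?_
    rw [smul_eq_mul, ← Real.rpow_natCast, ← Real.rpow_add hy.1, Nat.cast_sub Module.finrank_pos]
    congr 1
    push_cast
    ring
  rw [← integral_indicator measurableSet_ball, hradial, integral_fun_norm_addHaar μ,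
    hshell, integral_rpow (by left; linarith), sub_add_cancel, Real.zero_rpow hd.ne', sub_zero,
    nsmul_eq_mul, smul_eq_mul, mul_assoc]

theorem lintegral_ball_norm_rpow_neg {s : ℝ} (hs : s < Module.finrank ℝ E) {R : ℝ} (hR : 0 ≤ R) :
    ∫⁻ z in ball (0 : E) R, ENNReal.ofReal (‖z‖ ^ (-s)) ∂μ =
      ENNReal.ofReal (Module.finrank ℝ E * μ.real (ball 0 1) *
        (R ^ (Module.finrank ℝ E - s) / (Module.finrank ℝ E - s))) := by
  have hdecay : ∀ᵐ z ∂μ.restrict (ball 0 R), ‖‖z‖ ^ (-s)‖ ≤ 1 * ‖z‖ ^ (-s) :=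
    ae_of_all _ fun z => by rw [one_mul, Real.norm_of_nonneg (by positivity)]
  rw [← integral_ball_norm_rpow_neg μ hs hR, ofReal_integral_eq_lintegral_ofReal
    (integrableOn_ball_of_norm_le_rpow Module.finrank_pos hs hdecay
      (measurable_norm.pow_const _).aestronglyMeasurable)
    (ae_of_all _ fun z => by positivity)]

end RadialIntegral

theorem lintegral_ball_norm_rpow_neg_five_halves {R : ℝ} (hR : 0 ≤ R) :
    ∫⁻ z in ball (0 : E3) R, ENNReal.ofReal (‖z‖ ^ (-(5 / 2 : ℝ))) =
      ENNReal.ofReal (8 * π * R ^ (1 / 2 : ℝ)) := by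
  rw [lintegral_ball_norm_rpow_neg volume (by simp; norm_num) hR]
  simp [Measure.real, ENNReal.toReal_ofReal (by positivity : 0 ≤ π * 4 / 3)]
  ring_nf

section Kernel

variable {E : Type*} [NormedAddCommGroup E] [MeasurableSpace E] [BorelSpace E]
  {μ : Measure E} [μ.IsAddRightInvariant]

theorem lintegral_ball_mul_inv_norm_sub_le {p q : ℝ} (hpq : p.HolderConjugate q) {f : E → ℝ≥0∞}
    (hf : AEMeasurable f μ) (x : E) (R : ℝ) :
    ∫⁻ y in ball x R, f y * ENNReal.ofReal ‖x - y‖⁻¹ ∂μ ≤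
      (∫⁻ y, f y ^ p ∂μ) ^ (1 / p) *
        (∫⁻ z in ball 0 R, ENNReal.ofReal (‖z‖ ^ (-q)) ∂μ) ^ (1 / q) := by
  -- `ENNReal.ofReal` of the real inverse vanishes at `y = x`, just as `0 ^ (-q) = 0` in `ℝ`,
  -- so this holds everywhere and no null-set argument is needed.
  have hkernel : ∀ y, ENNReal.ofReal ‖x - y‖⁻¹ ^ q = ENNReal.ofReal (‖y - x‖ ^ (-q)) := fun y => by
    rw [ENNReal.ofReal_rpow_of_nonneg (by positivity) hpq.symm.nonneg,
      Real.inv_rpow (norm_nonneg _), ← Real.rpow_neg (norm_nonneg _), norm_sub_rev]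
  have htranslate : ball x R = (· - x) ⁻¹' ball 0 R := by ext y; simp [dist_eq_norm]
  calc _ ≤ (∫⁻ y in ball x R, f y ^ p ∂μ) ^ (1 / p) *
        (∫⁻ y in ball x R, ENNReal.ofReal ‖x - y‖⁻¹ ^ q ∂μ) ^ (1 / q) :=
        ENNReal.lintegral_mul_le_Lp_mul_Lq _ hpq hf.restrict (by fun_prop)
    _ ≤ _ := by
      simp_rw [hkernel]
      rw [htranslate, (measurePreserving_sub_right μ x).setLIntegral_comp_preimage_emb
        (measurableEmbedding_subRight x) (fun z => ENNReal.ofReal (‖z‖ ^ (-q)))]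
      have hp := hpq.pos
      gcongr
      exact Measure.restrict_le_self

end Kernel

theorem lintegral_compl_ball_mul_inv_norm_sub_le {E : Type*} [SeminormedAddCommGroup E]
    [MeasurableSpace E] [OpensMeasurableSpace E] (μ : Measure E) (f : E → ℝ≥0∞) (x : E) {R : ℝ}
    (hR : 0 < R) :
    ∫⁻ y in (ball x R)ᶜ, f y * ENNReal.ofReal ‖x - y‖⁻¹ ∂μ ≤
      (∫⁻ y, f y ∂μ) * ENNReal.ofReal R⁻¹ := by
  calc _ ≤ ∫⁻ y in (ball x R)ᶜ, f y * ENNReal.ofReal R⁻¹ ∂μ := by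
        refine setLIntegral_mono' measurableSet_ball.compl fun y hy => ?_
        have hRy : R ≤ ‖x - y‖ := by simpa [dist_eq_norm, norm_sub_rev] using hy
        gcongr
    _ ≤ ∫⁻ y, f y * ENNReal.ofReal R⁻¹ ∂μ := setLIntegral_le_lintegral _ _
    _ = _ := lintegral_mul_const' _ _ ENNReal.ofReal_ne_top

theorem integral_div_norm_sub_le {ρ : E3 → ℝ} (hpos : ∀ y, 0 ≤ ρ y) (hint : Integrable ρ)
    (hint53 : Integrable (fun y => ρ y ^ (5 / 3 : ℝ))) (x : E3) {R : ℝ} (hR : 0 < R) :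
    ∫ y, ρ y / ‖x - y‖ ≤ (∫ y, ρ y) / R +
      (8 * π) ^ (2 / 5 : ℝ) * R ^ (1 / 5 : ℝ) * (∫ y, ρ y ^ (5 / 3 : ℝ)) ^ (3 / 5 : ℝ) := by
  set m := ∫ y, ρ y
  set K := ∫ y, ρ y ^ (5 / 3 : ℝ)
  have hpos53 : ∀ y, 0 ≤ ρ y ^ (5 / 3 : ℝ) := fun y => Real.rpow_nonneg (hpos y) _
  have hm0 : 0 ≤ m := integral_nonneg hpos
  have hK0 : 0 ≤ K := integral_nonneg hpos53
  have hm : ∫⁻ y, ENNReal.ofReal (ρ y) = ENNReal.ofReal m :=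
    (ofReal_integral_eq_lintegral_ofReal hint (ae_of_all _ hpos)).symm
  have hK : ∫⁻ y, ENNReal.ofReal (ρ y) ^ (5 / 3 : ℝ) = ENNReal.ofReal K := by
    simp_rw [ENNReal.ofReal_rpow_of_nonneg (hpos _) (by norm_num : (0 : ℝ) ≤ 5 / 3)]
    exact (ofReal_integral_eq_lintegral_ofReal hint53 (ae_of_all _ hpos53)).symm
  have hnear := lintegral_ball_mul_inv_norm_sub_le (μ := volume)
    (Real.holderConjugate_iff.2 ⟨by norm_num, by norm_num⟩ : (5 / 3 : ℝ).HolderConjugate (5 / 2))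
    hint.aemeasurable.ennreal_ofReal x R
  rw [hK, lintegral_ball_norm_rpow_neg_five_halves hR.le,
    ENNReal.ofReal_rpow_of_nonneg hK0 (by norm_num),
    ENNReal.ofReal_rpow_of_nonneg (by positivity) (by norm_num),
    ← ENNReal.ofReal_mul (by positivity),
    Real.mul_rpow (by positivity) (by positivity), ← Real.rpow_mul hR.le] at hnear
  have hfar := lintegral_compl_ball_mul_inv_norm_sub_le volume (fun y => ENNReal.ofReal (ρ y)) x hR
  rw [hm, ← ENNReal.ofReal_mul hm0] at hfar
  have hsplit : ∀ y, ENNReal.ofReal ‖ρ y / ‖x - y‖‖ =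
      ENNReal.ofReal (ρ y) * ENNReal.ofReal ‖x - y‖⁻¹ := fun y => by
    rw [Real.norm_of_nonneg (div_nonneg (hpos y) (norm_nonneg _)), div_eq_mul_inv,
      ENNReal.ofReal_mul (hpos y)]
  calc ∫ y, ρ y / ‖x - y‖ ≤ (∫⁻ y, ENNReal.ofReal ‖ρ y / ‖x - y‖‖).toReal :=
        (Real.le_norm_self _).trans (norm_integral_le_lintegral_norm _)
    _ ≤ _ := by
      refine ENNReal.toReal_le_of_le_ofReal (by positivity) ?_
      rw [funext hsplit, ← lintegral_add_compl _ measurableSet_ball]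
      refine (add_le_add hnear hfar).trans_eq ?_
      rw [← ENNReal.ofReal_add (by positivity) (by positivity)]
      congr 1
      norm_num
      ring

theorem potential_energy_split_bound_general
    (ρ : E3 → ℝ) (hpos : ∀ y, 0 ≤ ρ y)
    (hint : Integrable ρ)
    (hint53 : Integrable (fun y : E3 => ρ y ^ ((5 : ℝ) / 3))) :
    ∀ R : ℝ, 0 < R →
      (1 / 2) * ∫ x : E3, ρ x * ∫ y : E3, ρ y / ‖x - y‖
        ≤ (1 / 2) * (∫ y : E3, ρ y) *
            ((∫ y : E3, ρ y) / R +
              (8 * π) ^ ((2 : ℝ) / 5) * R ^ ((1 : ℝ) / 5) *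
                (∫ y : E3, ρ y ^ ((5 : ℝ) / 3)) ^ ((3 : ℝ) / 5)) := by
  intro R hR
  set C := (∫ y : E3, ρ y) / R +
      (8 * π) ^ ((2 : ℝ) / 5) * R ^ ((1 : ℝ) / 5) * (∫ y : E3, ρ y ^ ((5 : ℝ) / 3)) ^ ((3 : ℝ) / 5)
  have hpotential : ∫ x, ρ x * ∫ y, ρ y / ‖x - y‖ ≤ ∫ x, ρ x * C :=
    integral_mono_of_nonneg
      (ae_of_all _ fun x => mul_nonneg (hpos x)
        (integral_nonneg fun y => div_nonneg (hpos y) (norm_nonneg _)))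
      (hint.mul_const C)
      (ae_of_all _ fun x =>
        mul_le_mul_of_nonneg_left (integral_div_norm_sub_le hpos hint hint53 x hR) (hpos x))
  rw [integral_mul_const] at hpotential
  linarith

/-- bound on the gravitational potential energy of a nonnegative
density, obtained by splitting the inner Newtonian integral at radius `R`. -/
theorem potential_energy_split_bound
    (ρ : E3 → ℝ) (hmeas : Measurable ρ) (hpos : ∀ y, 0 ≤ ρ y)
    (hint : Integrable ρ)
    (hint53 : Integrable (fun y : E3 => ρ y ^ ((5 : ℝ) / 3))) :
    ∀ R : ℝ, 0 < R →
      (1 / 2) * ∫ x : E3, ρ x * ∫ y : E3, ρ y / ‖x - y‖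
        ≤ (1 / 2) * (∫ y : E3, ρ y) *
            ((∫ y : E3, ρ y) / R +
              (8 * π) ^ ((2 : ℝ) / 5) * R ^ ((1 : ℝ) / 5) *
                (∫ y : E3, ρ y ^ ((5 : ℝ) / 3)) ^ ((3 : ℝ) / 5)) :=
  potential_energy_split_bound_general ρ hpos hint hint53
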